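/- arXiv:2208.03523 — 4 statements merged into one kernel-verified Lean document; each statement's English description precedes it below -/
import Mathlib

section
/- Let G be a finite connected graph, S a maximal k-independent set, ρ a cluster assignment of each vertex to a centroid at distance ≤ k, and H the coarsened graph on S (joining u ≠ w iff some edge of G crosses between their clusters). Then for all u, v ∈ S: dist_H(u, v) ≤ dist_G(u, v) ≤ (2k+1) · dist_H(u, v). -/
/-- `S` is a `k`-independent set of `G`: any two distinct members are at
graph distance greater than `k`. -/
def SimpleGraph.KIndep {V : Type*} (G : SimpleGraph V) (k : ℕ) (S : Set V) : Prop :=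
  ∀ u ∈ S, ∀ v ∈ S, u ≠ v → (k : ℕ∞) < G.edist u v

/-- `S` is a maximal `k`-independent set of `G`. -/
def SimpleGraph.MaxKIndep {V : Type*} (G : SimpleGraph V) (k : ℕ) (S : Set V) : Prop :=
  G.KIndep k S ∧ ∀ T : Set V, G.KIndep k T → S ⊆ T → T = S

/-- The coarsened graph on the centroid set `S`: two distinct centroids are
adjacent iff some edge of `G` crosses between their clusters (given by the
assignment `ρ`). -/
def SimpleGraph.coarse {V : Type*} (G : SimpleGraph V) (S : Set V) (ρ : V → V) :
    SimpleGraph S where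
  Adj u w := u ≠ w ∧ ∃ x y : V, G.Adj x y ∧ ρ x = ↑u ∧ ρ y = ↑w
  symm := ⟨fun u w ⟨hne, x, y, hxy, hx, hy⟩ => ⟨hne.symm, y, x, hxy.symm, hy, hx⟩⟩
  loopless := ⟨fun u h => h.1 rfl⟩

private lemma coarse_edist_le_walk {V : Type*} (G : SimpleGraph V) (S : Set V) (ρ : V → V)
    (hρS : ∀ v, ρ v ∈ S) :
    ∀ {x y : V} (p : G.Walk x y),
      (G.coarse S ρ).edist ⟨ρ x, hρS x⟩ ⟨ρ y, hρS y⟩ ≤ (p.length : ℕ∞) := by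
  intro x y p
  induction p with
  | nil => simp [SimpleGraph.edist_self]
  | @cons a b c h p ih =>
    by_cases hab : (⟨ρ a, hρS a⟩ : S) = ⟨ρ b, hρS b⟩
    · rw [hab]
      exact ih.trans (by simp)
    · have hadj : (G.coarse S ρ).Adj ⟨ρ a, hρS a⟩ ⟨ρ b, hρS b⟩ :=
        ⟨hab, a, b, h, rfl, rfl⟩
      calc (G.coarse S ρ).edist ⟨ρ a, hρS a⟩ ⟨ρ c, hρS c⟩
          ≤ (G.coarse S ρ).edist ⟨ρ a, hρS a⟩ ⟨ρ b, hρS b⟩ +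
            (G.coarse S ρ).edist ⟨ρ b, hρS b⟩ ⟨ρ c, hρS c⟩ := SimpleGraph.edist_triangle
        _ ≤ 1 + (p.length : ℕ∞) := by
            exact add_le_add (SimpleGraph.edist_le hadj.toWalk |>.trans (by simp)) ih
        _ = ((p.length + 1 : ℕ) : ℕ∞) := by push_cast; ring
        _ = _ := by simp

private lemma edist_le_coarse_walk {V : Type*} (G : SimpleGraph V) (k : ℕ) (S : Set V)
    (ρ : V → V) (hρd : ∀ v, G.edist v (ρ v) ≤ (k : ℕ∞)) :
    ∀ {u v : S} (q : (G.coarse S ρ).Walk u v),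
      G.edist ↑u ↑v ≤ ((2 * k + 1 : ℕ) : ℕ∞) * (q.length : ℕ∞) := by
  intro u v q
  induction q with
  | nil => simp [SimpleGraph.edist_self]
  | @cons a b c h q ih =>
    obtain ⟨hne, x, y, hxy, hx, hy⟩ := h
    have h1 : G.edist ↑a ↑b ≤ ((2 * k + 1 : ℕ) : ℕ∞) := by
      calc G.edist (a : V) b ≤ G.edist ↑a x + G.edist x ↑b := SimpleGraph.edist_triangle
        _ ≤ G.edist ↑a x + (G.edist x y + G.edist y ↑b) :=
            add_le_add_right SimpleGraph.edist_triangle _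
        _ ≤ (k : ℕ∞) + (1 + (k : ℕ∞)) := by
            refine add_le_add ?_ (add_le_add ?_ ?_)
            · rw [SimpleGraph.edist_comm, ← hx]; exact hρd x
            · exact SimpleGraph.edist_le hxy.toWalk |>.trans (by simp)
            · rw [← hy]; exact hρd y
        _ = ((2 * k + 1 : ℕ) : ℕ∞) := by push_cast; ring
    calc G.edist (a : V) c ≤ G.edist ↑a ↑b + G.edist ↑b ↑c := SimpleGraph.edist_triangle
      _ ≤ ((2 * k + 1 : ℕ) : ℕ∞) + ((2 * k + 1 : ℕ) : ℕ∞) * (q.length : ℕ∞) :=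
          add_le_add h1 ih
      _ = ((2 * k + 1 : ℕ) : ℕ∞) * (((q.length : ℕ) + 1 : ℕ) : ℕ∞) := by push_cast; ring
      _ = _ := rfl

theorem coarse_dist_bounds {V : Type*} [Fintype V] (G : SimpleGraph V)
    (hG : G.Connected) (k : ℕ) (S : Set V) (hS : G.MaxKIndep k S) (ρ : V → V)
    (hρS : ∀ v, ρ v ∈ S) (hρd : ∀ v, G.edist v (ρ v) ≤ (k : ℕ∞))
    (hρid : ∀ s ∈ S, ρ s = s) :
    ∀ u v : S, (G.coarse S ρ).edist u v ≤ G.edist ↑u ↑v ∧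
      G.edist ↑u ↑v ≤ ((2 * k + 1 : ℕ) : ℕ∞) * (G.coarse S ρ).edist u v := by
  intro u v
  constructor
  · obtain ⟨p, hp⟩ := hG.exists_walk_length_eq_edist (u : V) (v : V)
    have := coarse_edist_le_walk G S ρ hρS p
    have hu : (⟨ρ (u : V), hρS _⟩ : S) = u := Subtype.ext (hρid _ u.2)
    have hv : (⟨ρ (v : V), hρS _⟩ : S) = v := Subtype.ext (hρid _ v.2)
    rw [hu, hv, hp] at this
    exact this
  · rcases eq_or_ne ((G.coarse S ρ).edist u v) ⊤ with h | h
    · rw [h, ENat.mul_top (by simp)]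
      exact le_top
    · obtain ⟨q, hq⟩ := SimpleGraph.exists_walk_of_edist_ne_top h
      rw [← hq]
      exact edist_le_coarse_walk G k S ρ hρd q
end

section
/- Under the coarsening setup, for all vertices u, v of G: dist_H(ρ(u), ρ(v)) ≤ dist_G(u, v) ≤ (2k+1) · dist_H(ρ(u), ρ(v)) + 2k. -/
private lemma coarse_lower_aux {V : Type*} (G : SimpleGraph V) (S : Set V) (ρ : V → V)
    (hρS : ∀ v, ρ v ∈ S) : ∀ {u v : V} (w : G.Walk u v),
    (G.coarse S ρ).edist ⟨ρ u, hρS u⟩ ⟨ρ v, hρS v⟩ ≤ (w.length : ℕ∞) := by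
  intro u v w
  induction w with
  | nil => simp [SimpleGraph.edist_self]
  | @cons a b c h p ih =>
    by_cases hab : (⟨ρ a, hρS a⟩ : S) = ⟨ρ b, hρS b⟩
    · rw [hab]
      refine le_trans ih ?_
      simp only [SimpleGraph.Walk.length_cons]
      push_cast
      exact le_self_add
    · have hadj : (G.coarse S ρ).Adj ⟨ρ a, hρS a⟩ ⟨ρ b, hρS b⟩ :=
        ⟨hab, a, b, h, rfl, rfl⟩
      calc (G.coarse S ρ).edist ⟨ρ a, hρS a⟩ ⟨ρ c, hρS c⟩
          ≤ (G.coarse S ρ).edist ⟨ρ a, hρS a⟩ ⟨ρ b, hρS b⟩ +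
            (G.coarse S ρ).edist ⟨ρ b, hρS b⟩ ⟨ρ c, hρS c⟩ := SimpleGraph.edist_triangle
        _ ≤ 1 + (p.length : ℕ∞) :=
            add_le_add (le_of_eq (SimpleGraph.edist_eq_one_iff_adj.mpr hadj)) ih
        _ = ((p.cons h).length : ℕ∞) := by
            simp only [SimpleGraph.Walk.length_cons]
            push_cast
            ring

private lemma coarse_upper_edge {V : Type*} (G : SimpleGraph V) (k : ℕ) (S : Set V)
    (ρ : V → V) (hρd : ∀ v, G.edist v (ρ v) ≤ (k : ℕ∞)) {a b : S}
    (h : (G.coarse S ρ).Adj a b) : G.edist (a : V) (b : V) ≤ ((2 * k + 1 : ℕ) : ℕ∞) := by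
  obtain ⟨-, x, y, hxy, hx, hy⟩ := h
  calc G.edist (a : V) (b : V)
      ≤ G.edist (a : V) x + G.edist x (b : V) := SimpleGraph.edist_triangle
    _ ≤ G.edist (a : V) x + (G.edist x y + G.edist y (b : V)) := by
        gcongr; exact SimpleGraph.edist_triangle
    _ ≤ (k : ℕ∞) + (1 + (k : ℕ∞)) := by
        gcongr
        · rw [SimpleGraph.edist_comm, ← hx]; exact hρd x
        · exact SimpleGraph.edist_le hxy.toWalk
        · rw [← hy]; exact hρd y
    _ = ((2 * k + 1 : ℕ) : ℕ∞) := by push_cast; ring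

private lemma coarse_upper_aux {V : Type*} (G : SimpleGraph V) (k : ℕ) (S : Set V)
    (ρ : V → V) (hρd : ∀ v, G.edist v (ρ v) ≤ (k : ℕ∞)) :
    ∀ {a b : S} (w : (G.coarse S ρ).Walk a b),
    G.edist (a : V) (b : V) ≤ ((2 * k + 1 : ℕ) : ℕ∞) * (w.length : ℕ∞) := by
  intro a b w
  induction w with
  | nil => simp [SimpleGraph.edist_self]
  | @cons a b c h p ih =>
    calc G.edist (a : V) (c : V)
        ≤ G.edist (a : V) (b : V) + G.edist (b : V) (c : V) := SimpleGraph.edist_triangle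
      _ ≤ ((2 * k + 1 : ℕ) : ℕ∞) + ((2 * k + 1 : ℕ) : ℕ∞) * (p.length : ℕ∞) := by
          exact add_le_add (coarse_upper_edge G k S ρ hρd h) ih
      _ = ((2 * k + 1 : ℕ) : ℕ∞) * (((p.cons h).length : ℕ) : ℕ∞) := by
          simp only [SimpleGraph.Walk.length_cons]
          push_cast
          ring

theorem coarse_dist_bounds_all_vertices {V : Type*} [Fintype V] (G : SimpleGraph V)
    (hG : G.Connected) (k : ℕ) (S : Set V) (hS : G.MaxKIndep k S) (ρ : V → V)
    (hρS : ∀ v, ρ v ∈ S) (hρd : ∀ v, G.edist v (ρ v) ≤ (k : ℕ∞))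
    (hρid : ∀ s ∈ S, ρ s = s) :
    ∀ u v : V,
      (G.coarse S ρ).edist ⟨ρ u, hρS u⟩ ⟨ρ v, hρS v⟩ ≤ G.edist u v ∧
      G.edist u v ≤ ((2 * k + 1 : ℕ) : ℕ∞) *
          (G.coarse S ρ).edist ⟨ρ u, hρS u⟩ ⟨ρ v, hρS v⟩ + ((2 * k : ℕ) : ℕ∞) := by
  intro u v
  constructor
  · obtain ⟨p, hp⟩ := hG.exists_walk_length_eq_edist u v
    rw [← hp]
    exact coarse_lower_aux G S ρ hρS p
  · set H := G.coarse S ρ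
    by_cases htop : H.edist ⟨ρ u, hρS u⟩ ⟨ρ v, hρS v⟩ = ⊤
    · rw [htop, ENat.mul_top (by exact_mod_cast Nat.succ_ne_zero (2 * k))]
      simp
    · obtain ⟨q, hq⟩ := SimpleGraph.exists_walk_of_edist_ne_top htop
      calc G.edist u v
          ≤ G.edist u (ρ u) + G.edist (ρ u) (ρ v) + G.edist (ρ v) v := by
            calc G.edist u v ≤ G.edist u (ρ v) + G.edist (ρ v) v :=
                  SimpleGraph.edist_triangle
              _ ≤ (G.edist u (ρ u) + G.edist (ρ u) (ρ v)) + G.edist (ρ v) v :=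
                  add_le_add_left SimpleGraph.edist_triangle _
        _ ≤ (k : ℕ∞) + ((2 * k + 1 : ℕ) : ℕ∞) * (q.length : ℕ∞) + (k : ℕ∞) := by
            gcongr
            · exact hρd u
            · exact coarse_upper_aux G k S ρ hρd q
            · rw [SimpleGraph.edist_comm]; exact hρd v
        _ = ((2 * k + 1 : ℕ) : ℕ∞) * (q.length : ℕ∞) + ((2 * k : ℕ) : ℕ∞) := by
            push_cast; ring
        _ = ((2 * k + 1 : ℕ) : ℕ∞) * H.edist ⟨ρ u, hρS u⟩ ⟨ρ v, hρS v⟩ +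
            ((2 * k : ℕ) : ℕ∞) := by rw [hq]
end

section
/- Let G be a finite graph, S a maximal k-independent set of G, ρ a cluster assignment to centroids at distance ≤ k within the same connected component, and H the coarsened graph on S. Then H has the same number of connected components as G. -/
theorem coarse_card_connectedComponent {V : Type*} [Fintype V] (G : SimpleGraph V)
    (k : ℕ) (S : Set V) (hS : G.MaxKIndep k S) (ρ : V → V)
    (hρS : ∀ v, ρ v ∈ S) (hρd : ∀ v, G.edist v (ρ v) ≤ (k : ℕ∞))
    (hρid : ∀ s ∈ S, ρ s = s) :
    Nat.card (G.coarse S ρ).ConnectedComponent = Nat.card G.ConnectedComponent := by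
  have hreach : ∀ v, G.Reachable v (ρ v) := fun v =>
    SimpleGraph.edist_ne_top_iff_reachable.mp
      (fun h => by have := hρd v; rw [h, top_le_iff] at this; simp at this)
  have hadj : ∀ u w : S, (G.coarse S ρ).Adj u w → G.Reachable (u : V) (w : V) := by
    rintro u w ⟨hne, x, y, hxy, hx, hy⟩
    exact (hx ▸ (hreach x).symm).trans ((hxy.reachable).trans (hy ▸ hreach y))
  have hwalk : ∀ (u w : S), (G.coarse S ρ).Walk u w → G.Reachable (u : V) (w : V) := by
    intro u w p
    induction p with
    | nil => exact SimpleGraph.Reachable.refl _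
    | cons h _ ih => exact (hadj _ _ h).trans ih
  let f : (G.coarse S ρ).ConnectedComponent → G.ConnectedComponent :=
    SimpleGraph.ConnectedComponent.lift (fun s => G.connectedComponentMk (s : V))
      (fun u w p _ => SimpleGraph.ConnectedComponent.sound (hwalk u w p))
  -- walks in G map to reachability in the coarse graph
  have hback : ∀ (a b : V), G.Walk a b →
      (G.coarse S ρ).Reachable ⟨ρ a, hρS a⟩ ⟨ρ b, hρS b⟩ := by
    intro a b p
    induction p with
    | nil => exact SimpleGraph.Reachable.refl _
    | @cons x y z h _ ih =>
      by_cases hxy : ρ x = ρ y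
      · exact (by rw [show (⟨ρ x, hρS x⟩ : S) = ⟨ρ y, hρS y⟩ from Subtype.ext hxy]; exact ih)
      · have hH : (G.coarse S ρ).Adj ⟨ρ x, hρS x⟩ ⟨ρ y, hρS y⟩ :=
          ⟨fun he => hxy (congrArg Subtype.val he), x, y, h, rfl, rfl⟩
        exact hH.reachable.trans ih
  have hinj : Function.Injective f := by
    intro c d
    refine SimpleGraph.ConnectedComponent.ind₂ (fun u w h => ?_) c d
    have hr : G.Reachable (u : V) (w : V) := SimpleGraph.ConnectedComponent.exact h
    obtain ⟨p⟩ := hr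
    have := hback u w p
    rw [show (⟨ρ u, hρS u⟩ : S) = u from Subtype.ext (hρid u u.2),
        show (⟨ρ w, hρS w⟩ : S) = w from Subtype.ext (hρid w w.2)] at this
    exact SimpleGraph.ConnectedComponent.sound this
  have hsurj : Function.Surjective f := by
    refine SimpleGraph.ConnectedComponent.ind (fun v => ?_)
    exact ⟨(G.coarse S ρ).connectedComponentMk ⟨ρ v, hρS v⟩,
      SimpleGraph.ConnectedComponent.sound (hreach v).symm⟩
  exact Nat.card_eq_of_bijective f ⟨hinj, hsurj⟩
end

section
/- Let G be a nonempty graph with positive node weights x ∈ ℝ₊ⁿ, adjacency matrix A, and k ∈ ℕ. If S ⊆ V satisfies ∑_{v∈S} x_v ≥ ∑_{v∈V} x_v² / [(A+I)^k x]_v, then ∑_{v∈S} x_v ≥ α(G)/Δ_k where α(G) is the maximum weight of an independent set and Δ_k = max_v [(A+I)^k 1]_v. -/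
open scoped Classical Matrix

private lemma pow_entries_nonneg {V : Type*} [Fintype V] [DecidableEq V]
    (B : Matrix V V ℝ) (hB : ∀ i j, 0 ≤ B i j) (k : ℕ) :
    ∀ i j, 0 ≤ (B ^ k) i j := by
  induction k with
  | zero => intro i j; rw [pow_zero]; by_cases h : i = j <;> simp [Matrix.one_apply, h]
  | succ n ih =>
    intro i j
    rw [pow_succ, Matrix.mul_apply]
    exact Finset.sum_nonneg fun l _ => mul_nonneg (ih i l) (hB l j)

private lemma pow_diag_ge_one {V : Type*} [Fintype V] [DecidableEq V]
    (B : Matrix V V ℝ) (hB : ∀ i j, 0 ≤ B i j) (hBd : ∀ i, 1 ≤ B i i) (k : ℕ) :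
    ∀ i, 1 ≤ (B ^ k) i i := by
  induction k with
  | zero => intro i; simp
  | succ n ih =>
    intro i
    rw [pow_succ, Matrix.mul_apply]
    calc (1:ℝ) ≤ (B ^ n) i i * B i i :=
          one_le_mul_of_one_le_of_one_le (ih i) (hBd i)
      _ ≤ ∑ l, (B ^ n) i l * B l i :=
          Finset.single_le_sum (f := fun l => (B ^ n) i l * B l i)
            (fun l _ => mul_nonneg (pow_entries_nonneg B hB n i l) (hB l i))
            (Finset.mem_univ i)

theorem kMIS_approx_ratio_weights {V : Type*} [Fintype V] [Nonempty V]
    [DecidableEq V] (G : SimpleGraph V) [DecidableRel G.Adj] (k : ℕ)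
    (x : V → ℝ) (hx : ∀ v, 0 < x v) (S : Finset V)
    (hS : ∑ v ∈ S, x v ≥ ∑ v, x v ^ 2 / ((G.adjMatrix ℝ + 1) ^ k *ᵥ x) v)
    (α : ℝ)
    (hα : IsGreatest
      {y : ℝ | ∃ I : Finset V, (∀ u ∈ I, ∀ v ∈ I, ¬ G.Adj u v) ∧ y = ∑ v ∈ I, x v} α)
    (Δ : ℝ)
    (hΔ : IsGreatest (Set.range fun v => ((G.adjMatrix ℝ + 1) ^ k *ᵥ (fun _ => 1)) v) Δ) :
    ∑ v ∈ S, x v ≥ α / Δ := by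
  set B : Matrix V V ℝ := G.adjMatrix ℝ + 1 with hB
  set M : Matrix V V ℝ := B ^ k with hM
  have hBnn : ∀ i j, 0 ≤ B i j := by
    intro i j
    simp only [hB, Matrix.add_apply, Matrix.one_apply, SimpleGraph.adjMatrix_apply]
    by_cases h : G.Adj i j <;> by_cases h2 : i = j <;> simp [h, h2]
  have hBdiag : ∀ i, 1 ≤ B i i := by
    intro i; simp [hB, Matrix.one_apply]
  have hMnn := pow_entries_nonneg B hBnn k
  have hMdiag := pow_diag_ge_one B hBnn hBdiag k
  -- (M *ᵥ x)_v ≥ x v > 0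
  have hMx : ∀ v, x v ≤ (M *ᵥ x) v := by
    intro v
    rw [Matrix.mulVec, dotProduct]
    calc x v = 1 * x v := (one_mul _).symm
      _ ≤ M v v * x v := by
          exact mul_le_mul_of_nonneg_right (hMdiag v) (hx v).le
      _ ≤ ∑ l, M v l * x l :=
          Finset.single_le_sum (f := fun l => M v l * x l)
            (fun l _ => mul_nonneg (hMnn v l) (hx l).le) (Finset.mem_univ v)
  have hMxpos : ∀ v, 0 < (M *ᵥ x) v := fun v => lt_of_lt_of_le (hx v) (hMx v)
  -- M symmetric
  have hMsymm : M.IsSymm := by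
    apply Matrix.IsSymm.pow
    rw [hB]
    exact Matrix.IsSymm.add (G.isSymm_adjMatrix) (Matrix.isSymm_one)
  -- sum identity: ∑ (M x)_v = ∑ x_v (M 1)_v
  have hsum : ∑ v, (M *ᵥ x) v = ∑ v, x v * (M *ᵥ (fun _ => (1:ℝ))) v := by
    have : ∑ v, (M *ᵥ x) v = (fun _ => (1:ℝ)) ⬝ᵥ (M *ᵥ x) := by
      simp [dotProduct]
    rw [this, Matrix.dotProduct_mulVec, ← Matrix.mulVec_transpose, hMsymm.eq]
    simp [dotProduct, mul_comm]
  -- Δ bounds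
  have hΔub : ∀ v, (M *ᵥ (fun _ => (1:ℝ))) v ≤ Δ := by
    intro v
    exact hΔ.2 ⟨v, rfl⟩
  have hΔpos : 0 < Δ := by
    obtain ⟨v⟩ := ‹Nonempty V›
    refine lt_of_lt_of_le one_pos (le_trans ?_ (hΔub v))
    rw [Matrix.mulVec, dotProduct]
    calc (1:ℝ) ≤ M v v * 1 := by simpa using hMdiag v
      _ ≤ ∑ l, M v l * 1 :=
          Finset.single_le_sum (f := fun l => M v l * 1)
            (fun l _ => by simpa using hMnn v l) (Finset.mem_univ v)
  have hxsum : 0 < ∑ v, x v := Finset.sum_pos (fun v _ => hx v) Finset.univ_nonempty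
  -- ∑ (M x)_v ≤ Δ * ∑ x
  have hub : ∑ v, (M *ᵥ x) v ≤ Δ * ∑ v, x v := by
    rw [hsum, Finset.mul_sum]
    apply Finset.sum_le_sum
    intro v _
    rw [mul_comm Δ (x v)]
    exact mul_le_mul_of_nonneg_left (hΔub v) (hx v).le
  have hsumpos : 0 < ∑ v, (M *ᵥ x) v := Finset.sum_pos (fun v _ => hMxpos v) Finset.univ_nonempty
  -- Cauchy-Schwarz
  have hCS : (∑ v, x v) ^ 2 / ∑ v, (M *ᵥ x) v ≤ ∑ v, x v ^ 2 / (M *ᵥ x) v :=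
    Finset.sq_sum_div_le_sum_sq_div Finset.univ x (fun v _ => hMxpos v)
  have hchain : (∑ v, x v) / Δ ≤ ∑ v ∈ S, x v := by
    have h1 : (∑ v, x v) / Δ ≤ (∑ v, x v) ^ 2 / ∑ v, (M *ᵥ x) v := by
      rw [div_le_div_iff₀ hΔpos hsumpos]
      nlinarith [hub, hxsum.le]
    exact le_trans (le_trans h1 hCS) hS
  -- α ≤ ∑ x
  have hαle : α ≤ ∑ v, x v := by
    obtain ⟨I, _, hI⟩ := hα.1
    rw [hI]
    exact Finset.sum_le_sum_of_subset_of_nonneg (Finset.subset_univ I)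
      (fun v _ _ => (hx v).le)
  calc α / Δ ≤ (∑ v, x v) / Δ := by gcongr
    _ ≤ ∑ v ∈ S, x v := hchain
end
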